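/- arXiv:1608.08890 — 5 statements merged into one kernel-verified Lean document; each statement's English description precedes it below -/
import Mathlib

section
/- (Proposition 2.3, solution form.) Let p, q be even positive integers, let X, Y : ℝ × ℝ → ℝ be arbitrary functions, and define G(θ, ρ) = ρ · (ρ^q·cos θ·X(ρ^p cos θ, ρ^q sin θ) + ρ^p·sin θ·Y(ρ^p cos θ, ρ^q sin θ)) / (−q·ρ^q·sin θ·X(ρ^p cos θ, ρ^q sin θ) + p·ρ^p·cos θ·Y(ρ^p cos θ, ρ^q sin θ)) (division by zero taken as zero). Then G(θ, −ρ) = −G(θ, ρ) for all θ, ρ; consequently if r is a solution of r′(θ) = G(θ, r(θ)) on an interval I, then −r is also a solution on I, so the solution r̃(θ, h) with initial value h is an odd function of h. -/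
open Real

/-- Proposition 2.3, solution form: with `p, q` even positive
integers, the generalized polar vector field satisfies `G(θ, −ρ) = −G(θ, ρ)`;
consequently if `r` solves `r′ = G(θ, r)` on `I`, then so does `−r`. -/
theorem even_even_symmetry (p q : ℕ) (hp : 0 < p) (hq : 0 < q)
    (hpeven : Even p) (hqeven : Even q)
    (X Y : ℝ × ℝ → ℝ) (G : ℝ → ℝ → ℝ)
    (hG : ∀ θ ρ : ℝ, G θ ρ =
      ρ * (ρ ^ q * Real.cos θ * X (ρ ^ p * Real.cos θ, ρ ^ q * Real.sin θ) +
           ρ ^ p * Real.sin θ * Y (ρ ^ p * Real.cos θ, ρ ^ q * Real.sin θ)) /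
        (-(q : ℝ) * ρ ^ q * Real.sin θ * X (ρ ^ p * Real.cos θ, ρ ^ q * Real.sin θ) +
          (p : ℝ) * ρ ^ p * Real.cos θ * Y (ρ ^ p * Real.cos θ, ρ ^ q * Real.sin θ)))
    (I : Set ℝ) (r : ℝ → ℝ)
    (hr : ∀ θ ∈ I, HasDerivAt r (G θ (r θ)) θ) :
    (∀ θ ρ : ℝ, G θ (-ρ) = -G θ ρ) ∧
    (∀ θ ∈ I, HasDerivAt (fun t => -r t) (G θ (-r θ)) θ) := by
  have key : ∀ θ ρ : ℝ, G θ (-ρ) = -G θ ρ := by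
    intro θ ρ
    rw [hG, hG, hpeven.neg_pow, hqeven.neg_pow]
    ring
  refine ⟨key, fun θ hθ => ?_⟩
  have := (hr θ hθ).neg
  rw [← key θ (r θ)] at this
  exact this
end

section
/- (Proposition 2.4, solution form.) Let p be an odd positive integer and q an even positive integer, let X, Y : ℝ × ℝ → ℝ be arbitrary functions, and define G(θ, ρ) = ρ · (ρ^q·cos θ·X(ρ^p cos θ, ρ^q sin θ) + ρ^p·sin θ·Y(ρ^p cos θ, ρ^q sin θ)) / (−q·ρ^q·sin θ·X(ρ^p cos θ, ρ^q sin θ) + p·ρ^p·cos θ·Y(ρ^p cos θ, ρ^q sin θ)) (division by zero taken as zero). Then G(π − θ, −ρ) = G(θ, ρ) for all θ, ρ; consequently, if r : ℝ → ℝ is differentiable on an interval I and satisfies r′(θ) = G(θ, r(θ)) on I, then s(θ) := −r(π − θ) satisfies s′(θ) = G(θ, s(θ)) for all θ with π − θ ∈ I. -/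
open Real

noncomputable def genPolarSlope (p q : ℕ) (X Y : ℝ × ℝ → ℝ) (θ ρ : ℝ) : ℝ :=
  ρ * (ρ ^ q * cos θ * X (ρ ^ p * cos θ, ρ ^ q * sin θ) +
      ρ ^ p * sin θ * Y (ρ ^ p * cos θ, ρ ^ q * sin θ)) /
    (-(q : ℝ) * ρ ^ q * sin θ * X (ρ ^ p * cos θ, ρ ^ q * sin θ) +
      (p : ℝ) * ρ ^ p * cos θ * Y (ρ ^ p * cos θ, ρ ^ q * sin θ))

/-- `(-ρ) ^ p cos (π - θ) = ρ ^ p cos θ` and `(-ρ) ^ q sin (π - θ) = ρ ^ q sin θ`, so both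
the field values and the numerator and denominator are unchanged, up to a common sign. -/
theorem genPolarSlope_pi_sub_neg {p q : ℕ} (hp : Odd p) (hq : Even q) (X Y : ℝ × ℝ → ℝ)
    (θ ρ : ℝ) : genPolarSlope p q X Y (π - θ) (-ρ) = genPolarSlope p q X Y θ ρ := by
  simp only [genPolarSlope, hp.neg_pow, hq.neg_pow, cos_pi_sub, sin_pi_sub, neg_mul_neg]
  ring_nf

theorem hasDerivAt_neg_comp_pi_sub {G : ℝ → ℝ → ℝ} (hG : ∀ θ ρ, G (π - θ) (-ρ) = G θ ρ)
    {r : ℝ → ℝ} {θ : ℝ} (hr : HasDerivAt r (G (π - θ) (r (π - θ))) (π - θ)) :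
    HasDerivAt (fun t => -r (π - t)) (G θ (-r (π - θ))) θ := by
  have hcomp : HasDerivAt (fun t => -r (π - t)) (-(G (π - θ) (r (π - θ)) * -1)) θ :=
    (hr.comp θ ((hasDerivAt_id' θ).const_sub π)).neg
  rwa [mul_neg_one, neg_neg, ← neg_neg (r (π - θ)), hG] at hcomp

theorem odd_even_symmetry_general (p q : ℕ)
    (hpodd : Odd p) (hqeven : Even q)
    (X Y : ℝ × ℝ → ℝ) (G : ℝ → ℝ → ℝ)
    (hG : ∀ θ ρ : ℝ, G θ ρ =
      ρ * (ρ ^ q * Real.cos θ * X (ρ ^ p * Real.cos θ, ρ ^ q * Real.sin θ) +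
           ρ ^ p * Real.sin θ * Y (ρ ^ p * Real.cos θ, ρ ^ q * Real.sin θ)) /
        (-(q : ℝ) * ρ ^ q * Real.sin θ * X (ρ ^ p * Real.cos θ, ρ ^ q * Real.sin θ) +
          (p : ℝ) * ρ ^ p * Real.cos θ * Y (ρ ^ p * Real.cos θ, ρ ^ q * Real.sin θ)))
    (I : Set ℝ) (r : ℝ → ℝ)
    (hr : ∀ θ ∈ I, HasDerivAt r (G θ (r θ)) θ) :
    (∀ θ ρ : ℝ, G (π - θ) (-ρ) = G θ ρ) ∧
    (∀ θ : ℝ, π - θ ∈ I →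
      HasDerivAt (fun t => -r (π - t)) (G θ (-r (π - θ))) θ) := by
  obtain rfl : G = genPolarSlope p q X Y := funext₂ hG
  have hsymm := genPolarSlope_pi_sub_neg hpodd hqeven X Y
  exact ⟨hsymm, fun θ hθ => hasDerivAt_neg_comp_pi_sub hsymm (hr _ hθ)⟩

/-- Proposition 2.4, solution form: with `p` odd and `q` even,
the generalized polar vector field satisfies `G(π − θ, −ρ) = G(θ, ρ)`;
consequently if `r` solves `r′ = G(θ, r)` on `I`, then `s(θ) := −r(π − θ)`
solves it at every `θ` with `π − θ ∈ I`. -/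
theorem odd_even_symmetry (p q : ℕ) (hp : 0 < p) (hq : 0 < q)
    (hpodd : Odd p) (hqeven : Even q)
    (X Y : ℝ × ℝ → ℝ) (G : ℝ → ℝ → ℝ)
    (hG : ∀ θ ρ : ℝ, G θ ρ =
      ρ * (ρ ^ q * Real.cos θ * X (ρ ^ p * Real.cos θ, ρ ^ q * Real.sin θ) +
           ρ ^ p * Real.sin θ * Y (ρ ^ p * Real.cos θ, ρ ^ q * Real.sin θ)) /
        (-(q : ℝ) * ρ ^ q * Real.sin θ * X (ρ ^ p * Real.cos θ, ρ ^ q * Real.sin θ) +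
          (p : ℝ) * ρ ^ p * Real.cos θ * Y (ρ ^ p * Real.cos θ, ρ ^ q * Real.sin θ)))
    (I : Set ℝ) (r : ℝ → ℝ)
    (hr : ∀ θ ∈ I, HasDerivAt r (G θ (r θ)) θ) :
    (∀ θ ρ : ℝ, G (π - θ) (-ρ) = G θ ρ) ∧
    (∀ θ : ℝ, π - θ ∈ I →
      HasDerivAt (fun t => -r (π - t)) (G θ (-r (π - θ))) θ) :=
  odd_even_symmetry_general p q hpodd hqeven X Y G hG I r hr
end

section
/- (Proposition 2.5, solution form.) Let p be an even positive integer and q an odd positive integer, let X, Y : ℝ × ℝ → ℝ be arbitrary functions, and define G(θ, ρ) = ρ · (ρ^q·cos θ·X(ρ^p cos θ, ρ^q sin θ) + ρ^p·sin θ·Y(ρ^p cos θ, ρ^q sin θ)) / (−q·ρ^q·sin θ·X(ρ^p cos θ, ρ^q sin θ) + p·ρ^p·cos θ·Y(ρ^p cos θ, ρ^q sin θ)) (division by zero taken as zero). Then G(2π − θ, −ρ) = G(θ, ρ) for all θ, ρ; consequently, if r : ℝ → ℝ is differentiable on an interval I and satisfies r′(θ) = G(θ, r(θ)) on I, then s(θ)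 := −r(2π − θ) satisfies s′(θ) = G(θ, s(θ)) for all θ with 2π − θ ∈ I. -/
open Real

/-!
Replacing `(θ, ρ)` by `(2π - θ, -ρ)` fixes `cos θ` and `ρ ^ p` (as `p` is even) and negates
`sin θ` and `ρ ^ q` (as `q` is odd). Hence both arguments `ρ ^ p cos θ`, `ρ ^ q sin θ` of `X` and `Y`
are unchanged, the denominator of `G` is unchanged, and the numerator changes sign twice.
The invariance of `G` under this reflection turns the reflection `θ ↦ -r (2π - θ)` of a solution
into a solution, by the chain rule.
-/

noncomputable def generalizedPolarField (p q : ℕ) (X Y : ℝ × ℝ → ℝ) (θ ρ : ℝ) : ℝ :=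
  ρ * (ρ ^ q * cos θ * X (ρ ^ p * cos θ, ρ ^ q * sin θ) +
      ρ ^ p * sin θ * Y (ρ ^ p * cos θ, ρ ^ q * sin θ)) /
    (-(q : ℝ) * ρ ^ q * sin θ * X (ρ ^ p * cos θ, ρ ^ q * sin θ) +
      (p : ℝ) * ρ ^ p * cos θ * Y (ρ ^ p * cos θ, ρ ^ q * sin θ))

theorem generalizedPolarField_two_pi_sub_neg {p q : ℕ} (hp : Even p) (hq : Odd q)
    (X Y : ℝ × ℝ → ℝ) (θ ρ : ℝ) :
    generalizedPolarField p q X Y (2 * π - θ) (-ρ) = generalizedPolarField p q X Y θ ρ := by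
  simp only [generalizedPolarField, cos_two_pi_sub, sin_two_pi_sub, hp.neg_pow, hq.neg_pow,
    neg_mul_neg]
  congr 1 <;> ring

theorem HasDerivAt.neg_comp_const_sub_of_reflection_invariant {F : ℝ → ℝ → ℝ} {r : ℝ → ℝ}
    {c θ : ℝ} (hF : ∀ ρ, F (c - θ) (-ρ) = F θ ρ)
    (hr : HasDerivAt r (F (c - θ) (r (c - θ))) (c - θ)) :
    HasDerivAt (fun t => -r (c - t)) (F θ (-r (c - θ))) θ := by
  have hF' := hF (-r (c - θ))
  rw [neg_neg] at hF'
  rw [← hF', ← neg_neg (F _ _)]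
  exact (hr.comp_const_sub c θ).neg

theorem even_odd_symmetry_general (p q : ℕ)
    (hpeven : Even p) (hqodd : Odd q)
    (X Y : ℝ × ℝ → ℝ) (G : ℝ → ℝ → ℝ)
    (hG : ∀ θ ρ : ℝ, G θ ρ =
      ρ * (ρ ^ q * Real.cos θ * X (ρ ^ p * Real.cos θ, ρ ^ q * Real.sin θ) +
           ρ ^ p * Real.sin θ * Y (ρ ^ p * Real.cos θ, ρ ^ q * Real.sin θ)) /
        (-(q : ℝ) * ρ ^ q * Real.sin θ * X (ρ ^ p * Real.cos θ, ρ ^ q * Real.sin θ) +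
          (p : ℝ) * ρ ^ p * Real.cos θ * Y (ρ ^ p * Real.cos θ, ρ ^ q * Real.sin θ)))
    (I : Set ℝ) (r : ℝ → ℝ)
    (hr : ∀ θ ∈ I, HasDerivAt r (G θ (r θ)) θ) :
    (∀ θ ρ : ℝ, G (2 * π - θ) (-ρ) = G θ ρ) ∧
    (∀ θ : ℝ, 2 * π - θ ∈ I →
      HasDerivAt (fun t => -r (2 * π - t)) (G θ (-r (2 * π - θ))) θ) := by
  obtain rfl : G = generalizedPolarField p q X Y := funext₂ hG
  have hsymm := generalizedPolarField_two_pi_sub_neg hpeven hqodd X Y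
  exact ⟨hsymm, fun θ hθ => (hr _ hθ).neg_comp_const_sub_of_reflection_invariant (hsymm θ)⟩

/-- Proposition 2.5, solution form: with `p` even and `q` odd,
the generalized polar vector field satisfies `G(2π − θ, −ρ) = G(θ, ρ)`;
consequently if `r` solves `r′ = G(θ, r)` on `I`, then `s(θ) := −r(2π − θ)`
solves it at every `θ` with `2π − θ ∈ I`. -/
theorem even_odd_symmetry (p q : ℕ) (hp : 0 < p) (hq : 0 < q)
    (hpeven : Even p) (hqodd : Odd q)
    (X Y : ℝ × ℝ → ℝ) (G : ℝ → ℝ → ℝ)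
    (hG : ∀ θ ρ : ℝ, G θ ρ =
      ρ * (ρ ^ q * Real.cos θ * X (ρ ^ p * Real.cos θ, ρ ^ q * Real.sin θ) +
           ρ ^ p * Real.sin θ * Y (ρ ^ p * Real.cos θ, ρ ^ q * Real.sin θ)) /
        (-(q : ℝ) * ρ ^ q * Real.sin θ * X (ρ ^ p * Real.cos θ, ρ ^ q * Real.sin θ) +
          (p : ℝ) * ρ ^ p * Real.cos θ * Y (ρ ^ p * Real.cos θ, ρ ^ q * Real.sin θ)))
    (I : Set ℝ) (r : ℝ → ℝ)
    (hr : ∀ θ ∈ I, HasDerivAt r (G θ (r θ)) θ) :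
    (∀ θ ρ : ℝ, G (2 * π - θ) (-ρ) = G θ ρ) ∧
    (∀ θ : ℝ, 2 * π - θ ∈ I →
      HasDerivAt (fun t => -r (2 * π - t)) (G θ (-r (2 * π - θ))) θ) :=
  even_odd_symmetry_general p q hpeven hqodd X Y G hG I r hr
end

section
/- (Theorem 2.1, formal power series form.) Let f and g be formal power series over ℝ, each with constant coefficient 0 and linear coefficient 1, satisfying the composition identity f(g(X)) + g(−f(X)) = 0 in ℝ⟦X⟧ (compositions are substitution of a power series with zero constant coefficient). If m > 1 is the smallest integer such that the coefficient of X^m in g is nonzero, then m is odd. Equivalently: for every even m > 1, if all coefficients of X^j in g vanish for 1 < j < m, then the coefficient of X^m in g also vanishes. -/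
/-- Composition (substitution) of formal power series over `ℝ`, by the standard
coefficient formula; it agrees with substitution when the inner series has zero
constant coefficient. -/
noncomputable def pscomp (f g : PowerSeries ℝ) : PowerSeries ℝ :=
  PowerSeries.mk fun n =>
    ∑ k ∈ Finset.range (n + 1), PowerSeries.coeff (R := ℝ) k f * PowerSeries.coeff (R := ℝ) n (g ^ k)

/-!
Compare the coefficients of `X^m` on both sides of `f(g(X)) + g(-f(X)) = 0`. Since `g ≡ X`
modulo `X^m` and `f ≡ X` modulo `X^2`, only the terms of index `1` and `m` of the two
compositions contribute: `f(g(X))` gives `g_m + f_m` and `g(-f(X))` gives `-f_m + (-1)^m g_m`.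
Hence `(1 + (-1)^m) g_m = 0`, which forces `m` to be odd when `g_m ≠ 0`.
-/

open PowerSeries

theorem mul_dvd_pow_sub_pow {R : Type*} [CommRing R] {a b x y : R} (hx : a ∣ x) (hy : a ∣ y)
    (hxy : b ∣ x - y) (k : ℕ) : a ^ (k - 1) * b ∣ x ^ k - y ^ k := by
  rw [← geom_sum₂_mul]
  refine mul_dvd_mul (Finset.dvd_sum fun i hi => ?_) hxy
  have hik : i < k := Finset.mem_range.mp hi
  calc a ^ (k - 1) = a ^ i * a ^ (k - 1 - i) := by rw [← pow_add]; congr 1; omega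
    _ ∣ x ^ i * y ^ (k - 1 - i) := mul_dvd_mul (pow_dvd_pow_of_dvd hx i) (pow_dvd_pow_of_dvd hy _)

namespace PowerSeries

variable {R : Type*} [CommRing R]

theorem coeff_pow_eq_of_X_pow_dvd_sub {φ ψ : R⟦X⟧} (hφ : X ∣ φ) (hψ : X ∣ ψ) {j n k : ℕ}
    (hφψ : X ^ j ∣ φ - ψ) (hn : n < k - 1 + j) : coeff n (φ ^ k) = coeff n (ψ ^ k) := by
  have hdvd : X ^ (k - 1 + j) ∣ φ ^ k - ψ ^ k := by
    rw [pow_add]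
    exact mul_dvd_pow_sub_pow hφ hψ hφψ k
  rw [← sub_eq_zero, ← map_sub]
  exact X_pow_dvd_iff.mp hdvd n hn

theorem X_pow_dvd_sub_X {φ : R⟦X⟧} {n : ℕ} (h0 : coeff 0 φ = 0) (h1 : coeff 1 φ = 1)
    (h : ∀ j, 1 < j → j < n → coeff j φ = 0) : X ^ n ∣ φ - X :=
  X_pow_dvd_iff.mpr fun j hj => by
    rcases Nat.lt_or_ge j 2 with hj2 | hj2
    · rw [coeff_zero_eq_constantCoeff_apply] at h0
      interval_cases j <;> simp [h0, h1]
    · simp [h j hj2 hj, coeff_X, show j ≠ 1 by omega]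

end PowerSeries

theorem coeff_pscomp_eq_of_forall {f g : ℝ⟦X⟧} {n : ℕ} (hn : 1 < n)
    (hvanish : ∀ k < n, k ≠ 1 → coeff k f * coeff n (g ^ k) = 0) :
    coeff n (pscomp f g) = coeff 1 f * coeff n g + coeff n f * coeff n (g ^ n) := by
  rw [pscomp, coeff_mk, Finset.sum_eq_add 1 n hn.ne, pow_one]
  · intro k hk hk1n
    exact hvanish k (by grind) hk1n.1
  · exact fun h => absurd (Finset.mem_range.mpr (by omega)) h
  · exact fun h => absurd (Finset.self_mem_range_succ n) h

/-- Theorem 2.1, formal power series form: if `f` and `g` have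
zero constant term and unit linear term and satisfy `f(g(X)) + g(−f(X)) = 0`,
then the smallest `m > 1` with nonzero coefficient of `X^m` in `g` is odd. -/
theorem first_nonzero_coeff_odd (f g : PowerSeries ℝ)
    (hf0 : PowerSeries.coeff (R := ℝ) 0 f = 0) (hf1 : PowerSeries.coeff (R := ℝ) 1 f = 1)
    (hg0 : PowerSeries.coeff (R := ℝ) 0 g = 0) (hg1 : PowerSeries.coeff (R := ℝ) 1 g = 1)
    (hcomp : pscomp f g + pscomp g (-f) = 0)
    (m : ℕ) (hm : 1 < m) (hne : PowerSeries.coeff (R := ℝ) m g ≠ 0)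
    (hmin : ∀ j : ℕ, 1 < j → j < m → PowerSeries.coeff (R := ℝ) j g = 0) :
    Odd m := by
  by_contra hodd
  have hev : Even m := Nat.not_odd_iff_even.mp hodd
  have hXf : X ∣ f := X_dvd_iff.mpr (by rwa [← coeff_zero_eq_constantCoeff_apply])
  have hXg : X ∣ g := X_dvd_iff.mpr (by rwa [← coeff_zero_eq_constantCoeff_apply])
  have hfX : X ^ 2 ∣ f - X := X_pow_dvd_sub_X hf0 hf1 fun j hj hj2 => by omega
  have hgX : X ^ m ∣ g - X := X_pow_dvd_sub_X hg0 hg1 hmin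
  have hgk : ∀ k, 1 < k → coeff m (g ^ k) = coeff m (X ^ k) := fun k hk =>
    coeff_pow_eq_of_X_pow_dvd_sub hXg dvd_rfl hgX (by omega)
  have hfg : coeff m (pscomp f g) = coeff m g + coeff m f := by
    have hvanish : ∀ k < m, k ≠ 1 → coeff k f * coeff m (g ^ k) = 0 := fun k hk hk1 => by
      rcases Nat.lt_or_ge k 2 with hk2 | hk2
      · simp [show k = 0 by omega, show m ≠ 0 by omega]
      · simp [hgk k hk2, coeff_X_pow, hk.ne']
    rw [coeff_pscomp_eq_of_forall hm hvanish, hf1, hgk m hm, coeff_X_pow_self, one_mul, mul_one]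
  have hgf : coeff m (pscomp g (-f)) = -coeff m f + coeff m g := by
    have hvanish : ∀ k < m, k ≠ 1 → coeff k g * coeff m ((-f) ^ k) = 0 := fun k hk hk1 => by
      rcases Nat.lt_or_ge k 2 with hk2 | hk2
      · simp [show k = 0 by omega, hg0]
      · simp [hmin k hk2 hk]
    rw [coeff_pscomp_eq_of_forall hm hvanish, hg1, hev.neg_pow,
      coeff_pow_eq_of_X_pow_dvd_sub hXf dvd_rfl hfX (by omega), coeff_X_pow_self, map_neg,
      one_mul, mul_one]
  have hsum : coeff m (pscomp f g) + coeff m (pscomp g (-f)) = 0 := by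
    rw [← map_add, hcomp, map_zero]
  rw [hfg, hgf] at hsum
  exact hne (by linarith)
end

section
/- (Proposition 3.1.) Let a₂₂, a₅₀, b₁₃, b₄₁ be real numbers and let u₂ : ℝ → ℝ be any differentiable function with u₂(0) = 0 satisfying, for all real θ, u₂′(θ) = cos θ·(2cos²θ + 3sin²θ)·(3a₅₀cos⁹θ + 3a₂₂cos⁶θ·sin²θ + 2b₄₁cos³θ·sin⁴θ + 2b₁₃sin⁶θ) / (36·(cos⁶θ + sin⁴θ)^{25/12}). Then u₂(2π) = (1/60)·(5a₅₀ + b₄₁)·∫₀^{2π} cos¹⁰φ·(2cos²φ + 3sin²φ)·(cos⁶φ + sin⁴φ)^{−25/12} dφ. In particular the first focal value ν₂(2π) of the origin of the 2:3 homogeneous weight system equals this quantity. -/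
/-!
Integrating the equation for `u₂` over a period, `u₂(2π)` is a linear combination of the four
moments `∫₀^{2π} cos^k θ sin^m θ · w(θ) dθ` with `(k, m) ∈ {(10,0), (7,2), (4,4), (1,6)}`, where
`w = (2cos² + 3sin²)(cos⁶ + sin⁴)^{-25/12}` is `π`-periodic. The moments with `k + m` odd vanish
because their integrands are `π`-antiperiodic, and the `(4,4)` moment is `3/10` of the `(10,0)` one
because `(1/2) cos¹⁰ w - (5/3) cos⁴ sin⁴ w` is the derivative of the `2π`-periodic function
`cos⁵ sin (cos⁶ + sin⁴)^{-13/12}`, which vanishes at `0` and `2π`.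
-/

open Real

theorem Function.Antiperiodic.intervalIntegral_add_two_mul_eq_zero {E : Type*}
    [NormedAddCommGroup E] [NormedSpace ℝ E] {f : ℝ → E} {T : ℝ}
    (hf : Function.Antiperiodic f T) (t : ℝ) : ∫ x in t..t + 2 * T, f x = 0 := by
  have hshift : ∫ x in t..t + 2 * T, f (x + T) = ∫ x in t..t + 2 * T, f x := by
    rw [intervalIntegral.integral_comp_add_right, add_right_comm]
    exact hf.periodic_two_mul.intervalIntegral_add_eq _ _
  simp only [hf _, intervalIntegral.integral_neg] at hshift
  have htwice : (2 : ℝ) • ∫ x in t..t + 2 * T, f x = 0 := by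
    rw [two_smul]
    nth_rw 1 [← hshift]
    exact neg_add_cancel _
  exact (smul_eq_zero.mp htwice).resolve_left two_ne_zero

lemma cos_pow_six_add_sin_pow_four_pos (θ : ℝ) : 0 < cos θ ^ 6 + sin θ ^ 4 := by
  nlinarith [sin_sq_add_cos_sq θ, sq_nonneg (cos θ ^ 3), sq_nonneg (sin θ ^ 2 - cos θ ^ 2),
    mul_nonneg (sq_nonneg (cos θ)) (sq_nonneg (sin θ))]

noncomputable def focalWeight (θ : ℝ) : ℝ :=
  (2 * cos θ ^ 2 + 3 * sin θ ^ 2) * (cos θ ^ 6 + sin θ ^ 4) ^ (-(25 : ℝ) / 12)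

noncomputable def focalPrimitive (θ : ℝ) : ℝ :=
  cos θ ^ 5 * sin θ * (cos θ ^ 6 + sin θ ^ 4) ^ (-(13 : ℝ) / 12)

@[fun_prop]
lemma continuous_focalWeight : Continuous focalWeight := by
  unfold focalWeight
  exact (by fun_prop : Continuous _).mul <| (by fun_prop : Continuous _).rpow_const
    fun θ => Or.inl (cos_pow_six_add_sin_pow_four_pos θ).ne'

lemma focalWeight_periodic : Function.Periodic focalWeight π := by
  intro θ
  simp only [focalWeight, cos_add_pi, sin_add_pi, neg_sq, Even.neg_pow (by decide : Even 6),
    Even.neg_pow (by decide : Even 4)]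

lemma antiperiodic_cos_pow_mul_sin_pow_mul_focalWeight {k m : ℕ} (hkm : Odd (k + m)) :
    Function.Antiperiodic (fun θ => cos θ ^ k * sin θ ^ m * focalWeight θ) π := by
  intro θ
  simp only [cos_add_pi, sin_add_pi, focalWeight_periodic θ, neg_pow (cos θ), neg_pow (sin θ)]
  rw [mul_mul_mul_comm, ← pow_add, hkm.neg_one_pow]
  ring

lemma focalPrimitive_zero : focalPrimitive 0 = 0 := by
  simp [focalPrimitive]

lemma focalPrimitive_two_pi : focalPrimitive (2 * π) = 0 := by
  simp [focalPrimitive]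

lemma hasDerivAt_focalPrimitive (θ : ℝ) :
    HasDerivAt focalPrimitive
      ((1 / 2) * cos θ ^ 10 * focalWeight θ - (5 / 3) * cos θ ^ 4 * sin θ ^ 4 * focalWeight θ)
      θ := by
  have hD := cos_pow_six_add_sin_pow_four_pos θ
  have hpow := (((hasDerivAt_cos θ).pow 6).add ((hasDerivAt_sin θ).pow 4)).rpow_const
    (p := -(13 : ℝ) / 12) (Or.inl hD.ne')
  refine ((((hasDerivAt_cos θ).pow 5).mul (hasDerivAt_sin θ)).mul hpow).congr_deriv ?_
  simp only [Pi.add_apply, Pi.mul_apply, Pi.pow_apply]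
  rw [show -(13 : ℝ) / 12 - 1 = -(25 : ℝ) / 12 by norm_num,
    show -(13 : ℝ) / 12 = 1 + -(25 : ℝ) / 12 by norm_num, rpow_add hD, rpow_one, focalWeight]
  push_cast
  ring

lemma focal_rhs_eq (a22 a50 b13 b41 θ : ℝ) :
    cos θ * (2 * cos θ ^ 2 + 3 * sin θ ^ 2) *
        (3 * a50 * cos θ ^ 9 + 3 * a22 * cos θ ^ 6 * sin θ ^ 2 +
          2 * b41 * cos θ ^ 3 * sin θ ^ 4 + 2 * b13 * sin θ ^ 6) /
        (36 * (cos θ ^ 6 + sin θ ^ 4) ^ ((25 : ℝ) / 12)) =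
      a50 / 12 * cos θ ^ 10 * focalWeight θ + a22 / 12 * cos θ ^ 7 * sin θ ^ 2 * focalWeight θ +
        b41 / 18 * cos θ ^ 4 * sin θ ^ 4 * focalWeight θ +
        b13 / 18 * cos θ * sin θ ^ 6 * focalWeight θ := by
  have hD := cos_pow_six_add_sin_pow_four_pos θ
  rw [focalWeight, neg_div, rpow_neg hD.le]
  field_simp
  ring

/-- Proposition 3.1: any function `u₂` with `u₂(0) = 0` solving
the linear differential equation for the second coefficient of the 2:3
homogeneous weight system satisfies
`u₂(2π) = (1/60)(5a₅₀ + b₄₁) ∫₀^{2π} cos¹⁰φ (2cos²φ + 3sin²φ)(cos⁶φ + sin⁴φ)^{−25/12} dφ`,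
which is the first focal value `ν₂(2π)` of the origin. -/
theorem first_focal_value (a22 a50 b13 b41 : ℝ) (u2 : ℝ → ℝ)
    (h0 : u2 0 = 0)
    (hderiv : ∀ θ : ℝ, HasDerivAt u2
      (Real.cos θ * (2 * Real.cos θ ^ 2 + 3 * Real.sin θ ^ 2) *
        (3 * a50 * Real.cos θ ^ 9 + 3 * a22 * Real.cos θ ^ 6 * Real.sin θ ^ 2 +
          2 * b41 * Real.cos θ ^ 3 * Real.sin θ ^ 4 + 2 * b13 * Real.sin θ ^ 6) /
        (36 * (Real.cos θ ^ 6 + Real.sin θ ^ 4) ^ ((25 : ℝ) / 12))) θ) :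
    u2 (2 * π) =
      (1 / 60) * (5 * a50 + b41) *
        ∫ φ in (0:ℝ)..(2 * π), Real.cos φ ^ 10 *
          (2 * Real.cos φ ^ 2 + 3 * Real.sin φ ^ 2) *
          (Real.cos φ ^ 6 + Real.sin φ ^ 4) ^ (-(25 : ℝ) / 12) := by
  set oddPart : ℝ → ℝ := fun θ =>
    a22 / 12 * (cos θ ^ 7 * sin θ ^ 2 * focalWeight θ) +
      b13 / 18 * (cos θ ^ 1 * sin θ ^ 6 * focalWeight θ) with hoddPart
  have hoddPart_anti : Function.Antiperiodic oddPart π := fun θ => by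
    simp only [hoddPart, antiperiodic_cos_pow_mul_sin_pow_mul_focalWeight (k := 7) (m := 2)
      (by decide) θ, antiperiodic_cos_pow_mul_sin_pow_mul_focalWeight (k := 1) (m := 6)
      (by decide) θ]
    ring
  have hoddPart_integral : ∫ θ in (0 : ℝ)..2 * π, oddPart θ = 0 := by
    simpa using hoddPart_anti.intervalIntegral_add_two_mul_eq_zero 0
  -- adding `(b41/30) · focalPrimitive` to `u2` removes the `cos⁴ sin⁴` moment
  have hderiv' (θ : ℝ) : HasDerivAt (fun θ => u2 θ + b41 / 30 * focalPrimitive θ)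
      ((1 / 60) * (5 * a50 + b41) * (cos θ ^ 10 * focalWeight θ) + oddPart θ) θ :=
    ((hderiv θ).add ((hasDerivAt_focalPrimitive θ).const_mul _)).congr_deriv <| by
      rw [focal_rhs_eq]; ring
  have hFTC := intervalIntegral.integral_eq_sub_of_hasDerivAt (a := 0) (b := 2 * π)
    (fun θ _ => hderiv' θ) (Continuous.intervalIntegrable (by fun_prop) _ _)
  rw [intervalIntegral.integral_add (Continuous.intervalIntegrable (by fun_prop) _ _)
      (Continuous.intervalIntegrable (by fun_prop) _ _), intervalIntegral.integral_const_mul,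
    hoddPart_integral, focalPrimitive_zero, focalPrimitive_two_pi, h0] at hFTC
  simpa [focalWeight, mul_assoc] using hFTC.symm
end
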